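/- arXiv:2212.01509 — 2 statements merged into one kernel-verified Lean document; each statement's English description precedes it below -/
import Mathlib

section
/- Let S be a finite state space, and let p, q : S → ℝ be two probability mass functions (p s ≥ 0 and q s ≥ 0 for all s, with ∑_s p s = 1 and ∑_s q s = 1). Let V : S → ℝ satisfy 0 ≤ V s ≤ M for all s ∈ S, with M > 0, and set δ = ∑_s |p s − q s|. Let γ₀, γ_k be real numbers with 0 < γ₀ < γ_k. If δ < (γ_k − γ₀) · (∑_s q s · V s) / (γ₀ · M), then γ_k · (∑_s q s · V s) − γ₀ · (∑_s p s · V s) ≥ (γ_k − γ₀) · (∑_s q s · V s) − γ₀ · δ · M > 0. -/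
open Finset

theorem abs_sum_mul_sub_sum_mul_le {ι : Type*} (s : Finset ι) (p q f : ι → ℝ) {M : ℝ}
    (hf : ∀ i ∈ s, |f i| ≤ M) :
    |∑ i ∈ s, p i * f i - ∑ i ∈ s, q i * f i| ≤ (∑ i ∈ s, |p i - q i|) * M := by
  rw [← sum_sub_distrib, sum_mul]
  refine (abs_sum_le_sum_abs _ _).trans (sum_le_sum fun i hi => ?_)
  rw [← sub_mul, abs_mul]
  exact mul_le_mul_of_nonneg_left (hf i hi) (abs_nonneg _)

theorem crsfd_positive_shaped_reward_general {S : Type*} [Fintype S]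
    (p q V : S → ℝ) (M δ γ₀ γk : ℝ)
    (hV_nonneg : ∀ s, 0 ≤ V s) (hV_le : ∀ s, V s ≤ M) (hM : 0 < M)
    (hδ : δ = ∑ s, |p s - q s|)
    (hγ₀ : 0 < γ₀)
    (hδ_small : δ < (γk - γ₀) * (∑ s, q s * V s) / (γ₀ * M)) :
    γk * (∑ s, q s * V s) - γ₀ * (∑ s, p s * V s) ≥
        (γk - γ₀) * (∑ s, q s * V s) - γ₀ * δ * M ∧
      (γk - γ₀) * (∑ s, q s * V s) - γ₀ * δ * M > 0 := by
  have hV : ∀ s ∈ univ, |V s| ≤ M := fun s _ => by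
    rw [abs_of_nonneg (hV_nonneg s)]
    exact hV_le s
  have hshift : ∑ s, p s * V s - ∑ s, q s * V s ≤ δ * M :=
    hδ ▸ (le_abs_self _).trans (abs_sum_mul_sub_sum_mul_le univ p q V hV)
  have hgap : δ * (γ₀ * M) < (γk - γ₀) * ∑ s, q s * V s :=
    (lt_div_iff₀ (by positivity)).mp hδ_small
  constructor
  · linarith [mul_le_mul_of_nonneg_left hshift hγ₀.le]
  · linarith

/-- Theorem 1 of the paper (core quantitative form): for probability mass
functions `p = T₀(·|s,a)` and `q = T_k(·|s,a)` on a finite state space,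
a value function `V` with `0 ≤ V s ≤ M`, `M > 0`, total variation
`δ = ∑ s, |p s - q s|`, and discount factors `0 < γ₀ < γ_k`, if
`δ < (γ_k - γ₀) * E_q[V] / (γ₀ * M)` then
`γ_k * E_q[V] - γ₀ * E_p[V] ≥ (γ_k - γ₀) * E_q[V] - γ₀ * δ * M > 0`. -/
theorem crsfd_positive_shaped_reward {S : Type*} [Fintype S]
    (p q V : S → ℝ) (M δ γ₀ γk : ℝ)
    (hp_nonneg : ∀ s, 0 ≤ p s) (hq_nonneg : ∀ s, 0 ≤ q s)
    (hp_sum : ∑ s, p s = 1) (hq_sum : ∑ s, q s = 1)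
    (hV_nonneg : ∀ s, 0 ≤ V s) (hV_le : ∀ s, V s ≤ M) (hM : 0 < M)
    (hδ : δ = ∑ s, |p s - q s|)
    (hγ₀ : 0 < γ₀) (hγ : γ₀ < γk)
    (hδ_small : δ < (γk - γ₀) * (∑ s, q s * V s) / (γ₀ * M)) :
    γk * (∑ s, q s * V s) - γ₀ * (∑ s, p s * V s) ≥
        (γk - γ₀) * (∑ s, q s * V s) - γ₀ * δ * M ∧
      (γk - γ₀) * (∑ s, q s * V s) - γ₀ * δ * M > 0 :=
  crsfd_positive_shaped_reward_general p q V M δ γ₀ γk hV_nonneg hV_le hM hδ hγ₀ hδ_small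
end

section
/- Let S be a finite state space, s ∈ S a fixed state, and let p, q : S → ℝ be two probability mass functions (p s' ≥ 0 and q s' ≥ 0 for all s', with ∑_{s'} p s' = 1 and ∑_{s'} q s' = 1). Let V : S → ℝ satisfy 0 ≤ V s' ≤ M for all s' ∈ S with M > 0, and suppose V satisfies the Bellman relation V s = γ₀ · ∑_{s'} p s' · V s' for real numbers 0 < γ₀ < γ_k. Set δ = ∑_{s'} |p s' − q s'|. If δ < (γ_k − γ₀) · (∑_{s'} q s' · V s') / (γ₀ · M), then the shaped reward γ_k · (∑_{s'} q s' · V s') − V s is strictly positive. -/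
/-! Since `V` takes values in `[0, M]`, `E_p V ≤ E_q V + δ M`, so the Bellman relation gives
`V s ≤ γ₀ (E_q V + δ M)`; the bound on `δ` says exactly that `γ₀ δ M < (γk − γ₀) E_q V`, hence
`V s < γk · E_q V`. -/

open Finset

theorem sum_mul_sub_sum_mul_le {ι : Type*} (t : Finset ι) (p q V : ι → ℝ) {M : ℝ}
    (hV : ∀ i ∈ t, |V i| ≤ M) :
    ∑ i ∈ t, p i * V i - ∑ i ∈ t, q i * V i ≤ (∑ i ∈ t, |p i - q i|) * M := by
  rw [← sum_sub_distrib, sum_mul]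
  refine sum_le_sum fun i hi => ?_
  calc p i * V i - q i * V i = (p i - q i) * V i := by ring
    _ ≤ |(p i - q i) * V i| := le_abs_self _
    _ = |p i - q i| * |V i| := abs_mul _ _
    _ ≤ |p i - q i| * M := mul_le_mul_of_nonneg_left (hV i hi) (abs_nonneg _)

theorem crsfd_shaped_reward_pos_general {S : Type*} [Fintype S] (s : S)
    (p q V : S → ℝ) (M δ γ₀ γk : ℝ)
    (hV_nonneg : ∀ s', 0 ≤ V s') (hV_le : ∀ s', V s' ≤ M) (hM : 0 < M)
    (hγ₀ : 0 < γ₀)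
    (hBellman : V s = γ₀ * ∑ s', p s' * V s')
    (hδ : δ = ∑ s', |p s' - q s'|)
    (hδ_small : δ < (γk - γ₀) * (∑ s', q s' * V s') / (γ₀ * M)) :
    0 < γk * (∑ s', q s' * V s') - V s := by
  have hgap : ∑ s', p s' * V s' - ∑ s', q s' * V s' ≤ δ * M := hδ ▸
    sum_mul_sub_sum_mul_le univ p q V fun s' _ => abs_le.2 ⟨by linarith [hV_nonneg s'], hV_le s'⟩
  have hδ_small' := (lt_div_iff₀ (by positivity)).1 hδ_small
  rw [hBellman]
  linarith [mul_le_mul_of_nonneg_left hgap hγ₀.le]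

/-- Theorem 1 of the paper stated via the shaped reward: if the expert value
function `V` satisfies the Bellman relation `V s = γ₀ * ∑ s', p s' * V s'`
where `p = T₀(·|s,a)`, and the total variation `δ = ∑ s', |p s' - q s'|`
between the original and new kernels is small enough, then the expected
shaped reward `γ_k * ∑ s', q s' * V s' - V s` in the new task is strictly
positive. -/
theorem crsfd_shaped_reward_pos {S : Type*} [Fintype S] (s : S)
    (p q V : S → ℝ) (M δ γ₀ γk : ℝ)
    (hp_nonneg : ∀ s', 0 ≤ p s') (hq_nonneg : ∀ s', 0 ≤ q s')
    (hp_sum : ∑ s', p s' = 1) (hq_sum : ∑ s', q s' = 1)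
    (hV_nonneg : ∀ s', 0 ≤ V s') (hV_le : ∀ s', V s' ≤ M) (hM : 0 < M)
    (hγ₀ : 0 < γ₀) (hγ : γ₀ < γk)
    (hBellman : V s = γ₀ * ∑ s', p s' * V s')
    (hδ : δ = ∑ s', |p s' - q s'|)
    (hδ_small : δ < (γk - γ₀) * (∑ s', q s' * V s') / (γ₀ * M)) :
    0 < γk * (∑ s', q s' * V s') - V s :=
  crsfd_shaped_reward_pos_general s p q V M δ γ₀ γk hV_nonneg hV_le hM hγ₀ hBellman hδ hδ_small
end
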